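/- arXiv:2401.12339 — 4 statements merged into one kernel-verified Lean document; each statement's English description precedes it below -/
import Mathlib

section
/- Any linear 3-uniform hypergraph on n vertices that contains no copy of the crown C_{13} has at most 2n edges. -/
open Finset

/-- A linear `r`-uniform hypergraph: every edge has `r` vertices and
any two distinct edges intersect in at most one vertex. -/
def IsLinear {V : Type*} [DecidableEq V] (r : ℕ) (E : Finset (Finset V)) : Prop :=
  (∀ e ∈ E, e.card = r) ∧ ∀ e ∈ E, ∀ f ∈ E, e ≠ f → (e ∩ f).card ≤ 1

/-- The degree of a vertex: the number of edges containing it. -/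
def degree {V : Type*} [DecidableEq V] (E : Finset (Finset V)) (v : V) : ℕ :=
  (E.filter (fun e => v ∈ e)).card

/-- `E` contains a copy of the `r`-crown `C_{1r}`: `r` pairwise disjoint edges
together with one edge meeting each of them in exactly one vertex. -/
def HasCrown {V : Type*} [DecidableEq V] (r : ℕ) (E : Finset (Finset V)) : Prop :=
  ∃ e ∈ E, ∃ f : Fin r → Finset V,
    (∀ i, f i ∈ E) ∧ (∀ i, f i ≠ e) ∧
    (∀ i j, i ≠ j → f i ∩ f j = ∅) ∧
    (∀ i, (e ∩ f i).card = 1)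

/-- `E` contains a copy of `C*`: `r-2` edges pairwise meeting exactly in a common
vertex `v`, two further edges disjoint from each other and from all the others,
and one edge meeting each of the `r` edges in exactly one vertex, avoiding `v`. -/
def HasCStar {V : Type*} [DecidableEq V] (r : ℕ) (E : Finset (Finset V)) : Prop :=
  ∃ v : V, ∃ e ∈ E, ∃ f : Fin r → Finset V,
    (∀ i, f i ∈ E) ∧ (∀ i, f i ≠ e) ∧
    (∀ i : Fin r, (i : ℕ) < r - 2 → v ∈ f i) ∧
    (∀ i j : Fin r, (i : ℕ) < r - 2 → (j : ℕ) < r - 2 → i ≠ j → f i ∩ f j = {v}) ∧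
    (∀ i j : Fin r, r - 2 ≤ (i : ℕ) → i ≠ j → f i ∩ f j = ∅) ∧
    (∀ i, (e ∩ f i).card = 1) ∧ v ∉ e

section Aux

variable {V : Type*} [DecidableEq V]

lemma crownAux_singleton_of_card_le_one {s : Finset V} {a : V}
    (h : s.card ≤ 1) (ha : a ∈ s) : s = {a} :=
  Finset.eq_singleton_iff_unique_mem.mpr
    ⟨ha, fun x hx => Finset.card_le_one.mp h x hx a ha⟩

/-- In a linear hypergraph, two edges sharing two distinct vertices are equal. -/
lemma crownAux_pair_unique {E : Finset (Finset V)} (hlin : IsLinear 3 E)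
    {f g : Finset V} (hf : f ∈ E) (hg : g ∈ E) {x y : V} (hxy : x ≠ y)
    (hxf : x ∈ f) (hyf : y ∈ f) (hxg : x ∈ g) (hyg : y ∈ g) : f = g := by
  by_contra hne
  have h := hlin.2 f hf g hg hne
  exact hxy (Finset.card_le_one.mp h x (Finset.mem_inter.mpr ⟨hxf, hxg⟩)
    y (Finset.mem_inter.mpr ⟨hyf, hyg⟩))

/-- If `b` has large enough degree, there is an edge through `b`, different from `e`,
avoiding the vertex set `S`. -/
lemma crownAux_exists_avoiding {E : Finset (Finset V)} (hlin : IsLinear 3 E)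
    {e : Finset V} (he : e ∈ E) {b : V} (S : Finset V) (hbS : b ∉ S)
    (hdeg : S.card + 1 < degree E b) :
    ∃ f ∈ E, b ∈ f ∧ f ≠ e ∧ ∀ u ∈ S, u ∉ f := by
  classical
  set Bad : Finset (Finset V) :=
    insert e (S.biUnion fun u => E.filter fun f => b ∈ f ∧ u ∈ f) with hBad
  have hcard : Bad.card ≤ S.card + 1 := by
    have h1 : (S.biUnion fun u => E.filter fun f => b ∈ f ∧ u ∈ f).card
        ≤ ∑ u ∈ S, (E.filter fun f => b ∈ f ∧ u ∈ f).card := Finset.card_biUnion_le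
    have h2 : ∀ u ∈ S, (E.filter fun f => b ∈ f ∧ u ∈ f).card ≤ 1 := by
      intro u hu
      apply Finset.card_le_one.mpr
      intro f hf g hg
      simp only [Finset.mem_filter] at hf hg
      exact crownAux_pair_unique hlin hf.1 hg.1
        (fun h => hbS (by rw [h]; exact hu)) hf.2.1 hf.2.2 hg.2.1 hg.2.2
    have h3 : ∑ u ∈ S, (E.filter fun f => b ∈ f ∧ u ∈ f).card ≤ ∑ u ∈ S, 1 :=
      Finset.sum_le_sum h2
    have h4 : Bad.card ≤ (S.biUnion fun u => E.filter fun f => b ∈ f ∧ u ∈ f).card + 1 := by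
      rw [hBad]; exact Finset.card_insert_le _ _
    simp only [Finset.sum_const, smul_eq_mul, mul_one] at h3
    omega
  have hfil : Bad.card < (E.filter fun f => b ∈ f).card := lt_of_le_of_lt hcard hdeg
  obtain ⟨f, hfmem, hfBad⟩ : ∃ f ∈ E.filter (fun f => b ∈ f), f ∉ Bad := by
    by_contra hcon
    push_neg at hcon
    exact absurd (Finset.card_le_card hcon) (not_le.mpr hfil)
  simp only [Finset.mem_filter] at hfmem
  refine ⟨f, hfmem.1, hfmem.2, ?_, ?_⟩
  · intro h
    exact hfBad (by simp [hBad, h])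
  · intro u hu huf
    apply hfBad
    rw [hBad]
    exact Finset.mem_insert_of_mem (Finset.mem_biUnion.mpr
      ⟨u, hu, Finset.mem_filter.mpr ⟨hfmem.1, hfmem.2, huf⟩⟩)

/-- The key construction: an edge containing vertices of degrees ≥ 6, ≥ 2, ≥ 4
yields a crown. -/
lemma crownAux_crown_of_degrees {E : Finset (Finset V)} (hlin : IsLinear 3 E)
    {e : Finset V} (he : e ∈ E) {v a b : V} (hv : v ∈ e) (ha : a ∈ e) (hb : b ∈ e)
    (hva : v ≠ a) (hvb : v ≠ b) (hab : a ≠ b)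
    (hdv : 6 ≤ degree E v) (hda : 2 ≤ degree E a) (hdb : 4 ≤ degree E b) :
    HasCrown 3 E := by
  classical
  -- pick fa through a
  obtain ⟨fa, hfaE, hafa, hfane, -⟩ :=
    crownAux_exists_avoiding hlin he (b := a) (∅ : Finset V) (by simp)
      (by simp only [Finset.card_empty]; omega)
  have heafa : e ∩ fa = {a} :=
    crownAux_singleton_of_card_le_one (hlin.2 e he fa hfaE hfane.symm)
      (Finset.mem_inter.mpr ⟨ha, hafa⟩)
  have hcfa : fa.card = 3 := hlin.1 fa hfaE
  have hbfa : b ∉ fa := by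
    intro h
    have : b ∈ e ∩ fa := Finset.mem_inter.mpr ⟨hb, h⟩
    rw [heafa, Finset.mem_singleton] at this
    exact hab this.symm
  have hvfa : v ∉ fa := by
    intro h
    have : v ∈ e ∩ fa := Finset.mem_inter.mpr ⟨hv, h⟩
    rw [heafa, Finset.mem_singleton] at this
    exact hva this
  -- pick fb through b avoiding fa
  have hbS1 : b ∉ fa.erase a := fun h => hbfa (Finset.mem_of_mem_erase h)
  have hS1card : (fa.erase a).card = 2 := by
    rw [Finset.card_erase_of_mem hafa, hcfa]
  obtain ⟨fb, hfbE, hbfb, hfbne, hS1b⟩ :=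
    crownAux_exists_avoiding hlin he (b := b) (fa.erase a) hbS1 (by omega)
  have hebfb : e ∩ fb = {b} :=
    crownAux_singleton_of_card_le_one (hlin.2 e he fb hfbE hfbne.symm)
      (Finset.mem_inter.mpr ⟨hb, hbfb⟩)
  have hcfb : fb.card = 3 := hlin.1 fb hfbE
  have hafb : a ∉ fb := by
    intro h
    have : a ∈ e ∩ fb := Finset.mem_inter.mpr ⟨ha, h⟩
    rw [hebfb, Finset.mem_singleton] at this
    exact hab this
  have hvfb : v ∉ fb := by
    intro h
    have : v ∈ e ∩ fb := Finset.mem_inter.mpr ⟨hv, h⟩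
    rw [hebfb, Finset.mem_singleton] at this
    exact hvb this
  have hfafb : fa ∩ fb = ∅ := by
    ext x
    simp only [Finset.mem_inter, Finset.notMem_empty, iff_false, not_and]
    intro hxfa hxfb
    rcases eq_or_ne x a with rfl | hxa
    · exact hafb hxfb
    · exact hS1b x (Finset.mem_erase.mpr ⟨hxa, hxfa⟩) hxfb
  -- pick fv through v avoiding fa ∪ fb
  have hvS2 : v ∉ (fa.erase a) ∪ (fb.erase b) := by
    simp only [Finset.mem_union, not_or]
    exact ⟨fun h => hvfa (Finset.mem_of_mem_erase h),
      fun h => hvfb (Finset.mem_of_mem_erase h)⟩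
  have hS2card : ((fa.erase a) ∪ (fb.erase b)).card ≤ 4 := by
    have := Finset.card_union_le (fa.erase a) (fb.erase b)
    have h2 : (fb.erase b).card = 2 := by
      rw [Finset.card_erase_of_mem hbfb, hcfb]
    omega
  obtain ⟨fv, hfvE, hvfv, hfvne, hS2v⟩ :=
    crownAux_exists_avoiding hlin he (b := v) ((fa.erase a) ∪ (fb.erase b)) hvS2 (by omega)
  have hevfv : e ∩ fv = {v} :=
    crownAux_singleton_of_card_le_one (hlin.2 e he fv hfvE hfvne.symm)
      (Finset.mem_inter.mpr ⟨hv, hvfv⟩)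
  have hafv : a ∉ fv := by
    intro h
    have : a ∈ e ∩ fv := Finset.mem_inter.mpr ⟨ha, h⟩
    rw [hevfv, Finset.mem_singleton] at this
    exact hva this.symm
  have hbfv : b ∉ fv := by
    intro h
    have : b ∈ e ∩ fv := Finset.mem_inter.mpr ⟨hb, h⟩
    rw [hevfv, Finset.mem_singleton] at this
    exact hvb this.symm
  have hfafv : fa ∩ fv = ∅ := by
    ext x
    simp only [Finset.mem_inter, Finset.notMem_empty, iff_false, not_and]
    intro hxfa hxfv
    rcases eq_or_ne x a with rfl | hxa
    · exact hafv hxfv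
    · exact hS2v x (Finset.mem_union_left _ (Finset.mem_erase.mpr ⟨hxa, hxfa⟩)) hxfv
  have hfbfv : fb ∩ fv = ∅ := by
    ext x
    simp only [Finset.mem_inter, Finset.notMem_empty, iff_false, not_and]
    intro hxfb hxfv
    rcases eq_or_ne x b with rfl | hxb
    · exact hbfv hxfv
    · exact hS2v x (Finset.mem_union_right _ (Finset.mem_erase.mpr ⟨hxb, hxfb⟩)) hxfv
  have hfbfa : fb ∩ fa = ∅ := by rw [Finset.inter_comm]; exact hfafb
  have hfvfa : fv ∩ fa = ∅ := by rw [Finset.inter_comm]; exact hfafv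
  have hfvfb : fv ∩ fb = ∅ := by rw [Finset.inter_comm]; exact hfbfv
  refine ⟨e, he, ![fa, fb, fv], ?_, ?_, ?_, ?_⟩
  · intro i; fin_cases i <;> assumption
  · intro i; fin_cases i <;> assumption
  · intro i j hij
    fin_cases i <;> fin_cases j <;>
      simp_all [Matrix.cons_val_zero, Matrix.cons_val_one, Matrix.head_cons]
  · intro i
    fin_cases i <;>
      simp [Matrix.cons_val_zero, Matrix.cons_val_one, Matrix.head_cons,
        heafa, hebfb, hevfv]

/-- Weight function for the counting argument. -/
def crownWeight (d : ℕ) : ℕ :=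
  if d ≤ 1 then 6 else if d ≤ 3 then 3 else if d ≤ 5 then 2 else 0

lemma crownAux_six_le_sum {E : Finset (Finset V)} (hlin : IsLinear 3 E)
    (hfree : ¬ HasCrown 3 E) {e : Finset V} (he : e ∈ E) :
    6 ≤ ∑ u ∈ e, crownWeight (degree E u) := by
  obtain ⟨x, y, z, hxy, hxz, hyz, rfl⟩ := Finset.card_eq_three.mp (hlin.1 e he)
  have hx : x ∈ ({x, y, z} : Finset V) := by simp
  have hy : y ∈ ({x, y, z} : Finset V) := by simp
  have hz : z ∈ ({x, y, z} : Finset V) := by simp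
  have key : ∀ p q r : V, p ∈ ({x, y, z} : Finset V) → q ∈ ({x, y, z} : Finset V) →
      r ∈ ({x, y, z} : Finset V) → p ≠ q → p ≠ r → q ≠ r →
      ¬(6 ≤ degree E p ∧ 2 ≤ degree E q ∧ 4 ≤ degree E r) := by
    rintro p q r hp hq hr hpq hpr hqr ⟨h1, h2, h3⟩
    exact hfree (crownAux_crown_of_degrees hlin he hp hq hr hpq hpr hqr h1 h2 h3)
  have k1 := key x y z hx hy hz hxy hxz hyz
  have k2 := key x z y hx hz hy hxz hxy hyz.symm
  have k3 := key y x z hy hx hz hxy.symm hyz hxz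
  have k4 := key y z x hy hz hx hyz hxy.symm hxz.symm
  have k5 := key z x y hz hx hy hxz.symm hyz.symm hxy
  have k6 := key z y x hz hy hx hyz.symm hxz.symm hxy.symm
  rw [Finset.sum_insert (by simp [hxy, hxz]), Finset.sum_insert (by simp [hyz]),
    Finset.sum_singleton]
  unfold crownWeight
  split_ifs <;> omega

end Aux

/-- Any `C_{13}`-free linear 3-uniform hypergraph on `n` vertices has at most `2n` edges. -/
theorem crown_free_upper_bound {V : Type*} [DecidableEq V] [Fintype V]
    (E : Finset (Finset V)) (hlin : IsLinear 3 E) (hfree : ¬ HasCrown 3 E) :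
    E.card ≤ 2 * Fintype.card V := by
  classical
  have h1 : 6 * E.card ≤ ∑ e ∈ E, ∑ u ∈ e, crownWeight (degree E u) := by
    calc 6 * E.card = ∑ _e ∈ E, 6 := by
          rw [Finset.sum_const, smul_eq_mul, mul_comm]
      _ ≤ _ := Finset.sum_le_sum fun e he => crownAux_six_le_sum hlin hfree he
  have h2 : ∑ e ∈ E, ∑ u ∈ e, crownWeight (degree E u)
      = ∑ v : V, degree E v * crownWeight (degree E v) := by
    have hstep : ∀ e ∈ E, ∑ u ∈ e, crownWeight (degree E u)
        = ∑ v : V, if v ∈ e then crownWeight (degree E v) else 0 := by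
      intro e _
      rw [Finset.sum_ite_mem, Finset.univ_inter]
    rw [Finset.sum_congr rfl hstep, Finset.sum_comm]
    refine Finset.sum_congr rfl fun v _ => ?_
    rw [← Finset.sum_filter, Finset.sum_const, smul_eq_mul]
    rfl
  have h3 : ∀ v : V, degree E v * crownWeight (degree E v) ≤ 12 := by
    intro v
    unfold crownWeight
    split_ifs <;> omega
  have h4 : ∑ v : V, degree E v * crownWeight (degree E v) ≤ 12 * Fintype.card V := by
    calc ∑ v : V, degree E v * crownWeight (degree E v) ≤ ∑ _v : V, 12 :=
          Finset.sum_le_sum fun v _ => h3 v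
      _ = 12 * Fintype.card V := by
          rw [Finset.sum_const, smul_eq_mul, mul_comm, Finset.card_univ]
  have : 6 * E.card ≤ 12 * Fintype.card V := h2 ▸ h1 |>.trans h4
  omega
end

section
/- For n = 4m + 3, there exists a linear 3-uniform hypergraph on n vertices with 6m edges containing no copy of the crown C_{13}. Hence ex_3^{lin}(n, C_{13}) ≥ 6⌊(n-3)/4⌋ for n ≡ 3 (mod 4). -/
open Finset

namespace CrownAux

def pat : Fin 3 → Fin 2 → Finset (Fin 4 ⊕ Fin 3)
  | 0, 0 => {Sum.inl 0, Sum.inl 1, Sum.inr 0}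
  | 0, 1 => {Sum.inl 2, Sum.inl 3, Sum.inr 0}
  | 1, 0 => {Sum.inl 0, Sum.inl 2, Sum.inr 1}
  | 1, 1 => {Sum.inl 1, Sum.inl 3, Sum.inr 1}
  | 2, 0 => {Sum.inl 0, Sum.inl 3, Sum.inr 2}
  | 2, 1 => {Sum.inl 1, Sum.inl 2, Sum.inr 2}

lemma L1 : ∀ j s, (pat j s).card = 3 := by decide
lemma L2 : ∀ j s, Sum.inr j ∈ pat j s := by decide
lemma L3 : ∀ j s w, Sum.inr w ∈ pat j s → w = j := by decide
lemma L4 : ∀ j s j' s', pat j s ≠ pat j' s' → (pat j s ∩ pat j' s').card ≤ 1 := by decide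
lemma L5 : ∀ j s j' s', j ≠ j' → pat j s ∩ pat j' s' ≠ ∅ := by decide
lemma L6 : ∀ j s s', pat j s = pat j s' → s = s' := by decide
lemma L7 : ∀ j s, ∃ x, Sum.inl x ∈ pat j s := by decide

def emb (m : ℕ) (k : Fin m) : (Fin 4 ⊕ Fin 3) ↪ ((Fin m × Fin 4) ⊕ Fin 3) where
  toFun := Sum.map (fun x => (k, x)) id
  inj' := by rintro (a|a) (b|b) h <;> simp [Sum.map] at h <;> simp [h]

def edg (m : ℕ) (k : Fin m) (j : Fin 3) (s : Fin 2) :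
    Finset ((Fin m × Fin 4) ⊕ Fin 3) := (pat j s).map (emb m k)

def EE (m : ℕ) : Finset (Finset ((Fin m × Fin 4) ⊕ Fin 3)) :=
  (univ : Finset (Fin m × Fin 3 × Fin 2)).image (fun p => edg m p.1 p.2.1 p.2.2)

lemma inr_mem_edg (m : ℕ) (k : Fin m) (j : Fin 3) (s : Fin 2) :
    Sum.inr j ∈ edg m k j s :=
  mem_map.2 ⟨Sum.inr j, L2 j s, rfl⟩

lemma mem_edg_elim {m : ℕ} {k : Fin m} {j : Fin 3} {s : Fin 2}
    {x : (Fin m × Fin 4) ⊕ Fin 3} (h : x ∈ edg m k j s) :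
    x = Sum.inr j ∨ ∃ a, x = Sum.inl (k, a) ∧ Sum.inl a ∈ pat j s := by
  rw [edg, mem_map] at h
  obtain ⟨y, hy, rfl⟩ := h
  rcases y with a | w
  · exact Or.inr ⟨a, rfl, hy⟩
  · exact Or.inl (by rw [L3 j s w hy]; rfl)

lemma edg_inj {m : ℕ} : Function.Injective
    (fun p : Fin m × Fin 3 × Fin 2 => edg m p.1 p.2.1 p.2.2) := by
  rintro ⟨k, j, s⟩ ⟨k', j', s'⟩ h
  simp only at h
  -- j = j'
  have hj : j = j' := by
    have h1 := inr_mem_edg m k j s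
    rw [h] at h1
    rcases mem_edg_elim h1 with h2 | ⟨a, h2, _⟩
    · exact Sum.inr_injective h2
    · exact absurd h2 (by simp)
  subst hj
  -- k = k'
  obtain ⟨x, hx⟩ := L7 j s
  have h1 : Sum.inl (k, x) ∈ edg m k j s := mem_map.2 ⟨Sum.inl x, hx, rfl⟩
  rw [h] at h1
  have hk : k = k' := by
    rcases mem_edg_elim h1 with h2 | ⟨a, h2, _⟩
    · exact absurd h2 (by simp)
    · exact congrArg Prod.fst (Sum.inl_injective h2)
  subst hk
  have hs : s = s' := L6 j s s' (Finset.map_injective (emb m k) h)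
  simp [hs]

lemma card_EE (m : ℕ) : (EE m).card = 6 * m := by
  rw [EE, Finset.card_image_of_injective _ edg_inj]
  simp [Fintype.card_prod]
  ring

lemma mem_EE {m : ℕ} {e : Finset ((Fin m × Fin 4) ⊕ Fin 3)} (h : e ∈ EE m) :
    ∃ k j s, e = edg m k j s := by
  rw [EE, mem_image] at h
  obtain ⟨⟨k, j, s⟩, _, rfl⟩ := h
  exact ⟨k, j, s, rfl⟩

lemma isLinear_EE (m : ℕ) : IsLinear 3 (EE m) := by
  constructor
  · intro e he
    obtain ⟨k, j, s, rfl⟩ := mem_EE he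
    rw [edg, card_map, L1]
  · intro e he f hf hne
    obtain ⟨k, j, s, rfl⟩ := mem_EE he
    obtain ⟨k', j', s', rfl⟩ := mem_EE hf
    rcases eq_or_ne k k' with rfl | hk
    · rw [edg, edg, ← Finset.map_inter, card_map]
      exact L4 j s j' s' (fun hp => hne (by rw [edg, edg, hp]))
    · have hsub : edg m k j s ∩ edg m k' j' s' ⊆ {Sum.inr j} := by
        intro x hx
        rw [mem_inter] at hx
        rcases mem_edg_elim hx.1 with h1 | ⟨a, h1, _⟩
        · simp [h1]
        · rcases mem_edg_elim hx.2 with h2 | ⟨b, h2, _⟩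
          · simp [h1] at h2
          · rw [h1] at h2
            exact absurd (congrArg Prod.fst (Sum.inl_injective h2)) hk
      calc (edg m k j s ∩ edg m k' j' s').card ≤ ({Sum.inr j} : Finset _).card :=
            card_le_card hsub
        _ = 1 := card_singleton _

lemma two_ne : ∀ (g : Fin 3 → Fin 3), Function.Injective g → ∀ J : Fin 3,
    ∃ i₀ i₁ : Fin 3, i₀ ≠ i₁ ∧ g i₀ ≠ J ∧ g i₁ ≠ J := by decide

lemma crownFree_EE (m : ℕ) : ¬ HasCrown 3 (EE m) := by
  rintro ⟨e, he, f, hfE, -, hdisj, hcard⟩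
  obtain ⟨K, J, S, rfl⟩ := mem_EE he
  choose k j s hf using fun i => mem_EE (hfE i)
  -- j is injective
  have hjinj : Function.Injective j := by
    intro i i' h
    by_contra hne
    have h1 : Sum.inr (j i) ∈ f i ∩ f i' := by
      rw [mem_inter, hf i, hf i']
      exact ⟨inr_mem_edg _ _ _ _, h ▸ inr_mem_edg _ _ _ _⟩
    rw [hdisj i i' hne] at h1
    exact absurd h1 (notMem_empty _)
  obtain ⟨i₀, i₁, hne, hJ₀, hJ₁⟩ := two_ne j hjinj J
  -- each f i with j i ≠ J lives in copy K
  have hcopy : ∀ i, j i ≠ J → k i = K := by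
    intro i hiJ
    have h1 : (edg m K J S ∩ f i).Nonempty :=
      card_pos.1 (by rw [hcard i]; norm_num)
    obtain ⟨x, hx⟩ := h1
    rw [mem_inter] at hx
    rcases mem_edg_elim (hf i ▸ hx.2) with h2 | ⟨a, h2, _⟩
    · rcases mem_edg_elim hx.1 with h3 | ⟨b, h3, _⟩
      · rw [h2] at h3; exact absurd (Sum.inr_injective h3) hiJ
      · rw [h2] at h3; exact absurd h3 (by simp)
    · rcases mem_edg_elim hx.1 with h3 | ⟨b, h3, _⟩
      · rw [h2] at h3; exact absurd h3 (by simp)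
      · rw [h2] at h3
        exact (congrArg Prod.fst (Sum.inl_injective h3))
  have hk₀ := hcopy i₀ hJ₀
  have hk₁ := hcopy i₁ hJ₁
  -- f i₀ and f i₁ intersect, contradiction with disjointness
  have h1 := hdisj i₀ i₁ hne
  rw [hf i₀, hf i₁, hk₀, hk₁, edg, edg, ← Finset.map_inter] at h1
  have h2 : pat (j i₀) (s i₀) ∩ pat (j i₁) (s i₁) = ∅ :=
    Finset.map_eq_empty.1 h1
  exact L5 _ _ _ _ (fun h => hne (hjinj h)) h2

end CrownAux

section
variable {V W : Type*} [DecidableEq V] [DecidableEq W]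

lemma transfer (σ : V ≃ W) (E : Finset (Finset V)) (r : ℕ)
    (h1 : IsLinear r E) (h2 : ¬ HasCrown r E) :
    IsLinear r (E.image fun e => e.map σ.toEmbedding) ∧
    ¬ HasCrown r (E.image fun e => e.map σ.toEmbedding) ∧
    (E.image fun e => e.map σ.toEmbedding).card = E.card := by
  have hminj : Function.Injective (fun e : Finset V => e.map σ.toEmbedding) :=
    Finset.map_injective _
  refine ⟨⟨?_, ?_⟩, ?_, Finset.card_image_of_injective _ hminj⟩
  · intro e he
    obtain ⟨e₀, he₀, rfl⟩ := mem_image.1 he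
    rw [card_map]; exact h1.1 e₀ he₀
  · intro e he f hf hne
    obtain ⟨e₀, he₀, rfl⟩ := mem_image.1 he
    obtain ⟨f₀, hf₀, rfl⟩ := mem_image.1 hf
    rw [← Finset.map_inter, card_map]
    exact h1.2 e₀ he₀ f₀ hf₀ (fun h => hne (by rw [h]))
  · rintro ⟨e, he, f, hfE, hfne, hdisj, hcard⟩
    obtain ⟨e₀, he₀, rfl⟩ := mem_image.1 he
    choose g hgE hg using fun i => mem_image.1 (hfE i)
    refine h2 ⟨e₀, he₀, g, hgE, ?_, ?_, ?_⟩
    · intro i h; exact hfne i (by rw [← hg i, h])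
    · intro i j hij
      have := hdisj i j hij
      rw [← hg i, ← hg j, ← Finset.map_inter] at this
      exact Finset.map_eq_empty.1 this
    · intro i
      have := hcard i
      rw [← hg i, ← Finset.map_inter, card_map] at this
      exact this
end


/-- Main construction packaged on `Fin (4*m+3)`. -/
lemma CrownAux.main (m : ℕ) : ∃ E : Finset (Finset (Fin (4 * m + 3))),
    IsLinear 3 E ∧ ¬ HasCrown 3 E ∧ E.card = 6 * m := by
  have hcard : Fintype.card ((Fin m × Fin 4) ⊕ Fin 3) = 4 * m + 3 := by
    simp [Fintype.card_sum, Fintype.card_prod]; ring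
  let σ : ((Fin m × Fin 4) ⊕ Fin 3) ≃ Fin (4 * m + 3) :=
    Fintype.equivFinOfCardEq hcard
  obtain ⟨h1, h2, h3⟩ := transfer σ (CrownAux.EE m) 3
    (CrownAux.isLinear_EE m) (CrownAux.crownFree_EE m)
  exact ⟨_, h1, h2, by rw [h3, CrownAux.card_EE]⟩

/-- For `n = 4m+3` there is a crown-free linear 3-graph on `n` vertices with `6m` edges;
hence `ex_3^{lin}(n, C_{13}) ≥ 6⌊(n-3)/4⌋` when `n ≡ 3 (mod 4)`. -/
theorem crown_free_lower_bound :
    (∀ m : ℕ, ∃ E : Finset (Finset (Fin (4 * m + 3))),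
      IsLinear 3 E ∧ ¬ HasCrown 3 E ∧ E.card = 6 * m) ∧
    (∀ n : ℕ, n % 4 = 3 → ∃ E : Finset (Finset (Fin n)),
      IsLinear 3 E ∧ ¬ HasCrown 3 E ∧ 6 * ((n - 3) / 4) ≤ E.card) := by
  refine ⟨CrownAux.main, ?_⟩
  intro n hn
  obtain ⟨m, rfl⟩ : ∃ m, n = 4 * m + 3 := ⟨(n - 3) / 4, by omega⟩
  obtain ⟨E, h1, h2, h3⟩ := CrownAux.main m
  refine ⟨E, h1, h2, ?_⟩
  have : (4 * m + 3 - 3) / 4 = m := by omega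
  rw [this, h3]
end

section
/- Let r ≥ 3 with r - 1 a prime power, and let n = (r-1)^2 m + r for a positive integer m. Then there exists a linear r-uniform hypergraph on n vertices with r(r-1)m edges that contains no copy of C_{1r} and no copy of C*. Consequently ex_r^{lin}(n, {C_{1r}, C*}) ≥ r(r-1)⌊(n-r)/(r-1)^2⌋. -/
open Finset

namespace CrownConstr

variable {F : Type*} [Field F] [Fintype F] [DecidableEq F]

/-- The line with slope `s` (`none` = vertical) and parameter `b`, as a set of points. -/
def lineSet (s : Option F) (b : F) : Finset (F × F) :=
  match s with
  | some a => Finset.univ.image fun x => (x, a * x + b)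
  | none => Finset.univ.image fun y => (b, y)

lemma mem_lineSet_some {a b : F} {p : F × F} :
    p ∈ lineSet (some a) b ↔ p.2 = a * p.1 + b := by
  simp only [lineSet, mem_image, mem_univ, true_and]
  constructor
  · rintro ⟨x, rfl⟩; rfl
  · intro h
    exact ⟨p.1, by rw [← h]⟩

lemma mem_lineSet_none {b : F} {p : F × F} :
    p ∈ lineSet none b ↔ p.1 = b := by
  simp only [lineSet, mem_image, mem_univ, true_and]
  constructor
  · rintro ⟨x, rfl⟩; rfl
  · intro h
    exact ⟨p.2, by rw [← h]⟩

lemma lineSet_nonempty (s : Option F) (b : F) : (lineSet s b).Nonempty := by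
  cases s with
  | none => exact ⟨(b, 0), mem_lineSet_none.2 rfl⟩
  | some a => exact ⟨(0, a * 0 + b), mem_lineSet_some.2 rfl⟩

lemma card_lineSet (s : Option F) (b : F) : (lineSet s b).card = Fintype.card F := by
  cases s with
  | none =>
    rw [lineSet, Finset.card_image_of_injective _ (fun x y h => (Prod.mk.injEq _ _ _ _ ▸ h : _ ∧ _).2),
      Finset.card_univ]
  | some a =>
    rw [lineSet, Finset.card_image_of_injective _ (fun x y h => (Prod.mk.injEq _ _ _ _ ▸ h : _ ∧ _).1),
      Finset.card_univ]

lemma lineSet_same_slope {s : Option F} {b b' : F} {p : F × F}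
    (h : p ∈ lineSet s b) (h' : p ∈ lineSet s b') : b = b' := by
  cases s with
  | none => rw [mem_lineSet_none] at h h'; rw [← h, h']
  | some a =>
    rw [mem_lineSet_some] at h h'
    have := h.symm.trans h'
    exact add_left_cancel this

lemma lineSet_inter_unique {s s' : Option F} {b b' : F} {p q : F × F}
    (hss : s ≠ s') (hp : p ∈ lineSet s b) (hp' : p ∈ lineSet s' b')
    (hq : q ∈ lineSet s b) (hq' : q ∈ lineSet s' b') : p = q := by
  cases s with
  | none =>
    cases s' with
    | none => exact absurd rfl hss
    | some a =>
      rw [mem_lineSet_none] at hp hq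
      rw [mem_lineSet_some] at hp' hq'
      have h1 : p.1 = q.1 := hp.trans hq.symm
      exact Prod.ext h1 (by rw [hp', hq', h1])
  | some a =>
    cases s' with
    | none =>
      rw [mem_lineSet_none] at hp' hq'
      rw [mem_lineSet_some] at hp hq
      have h1 : p.1 = q.1 := hp'.trans hq'.symm
      exact Prod.ext h1 (by rw [hp, hq, h1])
    | some a' =>
      have ha : a ≠ a' := fun h => hss (by rw [h])
      rw [mem_lineSet_some] at hp hq hp' hq'
      have h1 : (a - a') * p.1 = (a - a') * q.1 := by
        have e1 : a * p.1 + b = a' * p.1 + b' := hp.symm.trans hp'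
        have e2 : a * q.1 + b = a' * q.1 + b' := hq.symm.trans hq'
        ring_nf
        ring_nf at e1 e2
        linear_combination e1 - e2
      have h2 : p.1 = q.1 := mul_left_cancel₀ (sub_ne_zero.2 ha) h1
      exact Prod.ext h2 (by rw [hp, hq, h2])

lemma lineSet_inter_nonempty {s s' : Option F} (b b' : F) (hss : s ≠ s') :
    ∃ p, p ∈ lineSet s b ∧ p ∈ lineSet s' b' := by
  cases s with
  | none =>
    cases s' with
    | none => exact absurd rfl hss
    | some a =>
      exact ⟨(b, a * b + b'), mem_lineSet_none.2 rfl, mem_lineSet_some.2 rfl⟩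
  | some a =>
    cases s' with
    | none =>
      exact ⟨(b', a * b' + b), mem_lineSet_some.2 rfl, mem_lineSet_none.2 rfl⟩
    | some a' =>
      have ha : a - a' ≠ 0 := sub_ne_zero.2 fun h => hss (by rw [h])
      refine ⟨((b' - b) / (a - a'), a * ((b' - b) / (a - a')) + b),
        mem_lineSet_some.2 rfl, mem_lineSet_some.2 ?_⟩
      field_simp
      ring

variable {m : ℕ}

/-- An edge of the construction: the line `(s, b)` inside block `t`, plus the apex of slope `s`. -/
def edg (t : Fin m) (s : Option F) (b : F) : Finset ((Fin m × F × F) ⊕ Option F) :=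
  ((lineSet s b).image fun p => Sum.inl (t, p.1, p.2)) ∪ {Sum.inr s}

lemma mem_edg_inl {t t' : Fin m} {s : Option F} {b x y : F} :
    Sum.inl (t', x, y) ∈ edg t s b ↔ t' = t ∧ (x, y) ∈ lineSet s b := by
  simp only [edg, mem_union, mem_image, mem_singleton]
  constructor
  · rintro (⟨p, hp, heq⟩ | h)
    · obtain ⟨h1, h2, h3⟩ : t = t' ∧ p.1 = x ∧ p.2 = y := by
        simpa [Prod.ext_iff] using heq
      exact ⟨h1.symm, by rw [← h2, ← h3]; exact hp⟩
    · simp at h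
  · rintro ⟨rfl, h⟩
    exact Or.inl ⟨(x, y), h, rfl⟩

lemma mem_edg_inr {t : Fin m} {s s' : Option F} {b : F} :
    Sum.inr s' ∈ edg t s b ↔ s' = s := by
  simp [edg]

lemma apex_mem_edg {t : Fin m} {s : Option F} {b : F} : Sum.inr s ∈ edg t s b :=
  mem_edg_inr.2 rfl

lemma card_edg (t : Fin m) (s : Option F) (b : F) :
    (edg t s b).card = Fintype.card F + 1 := by
  rw [edg, Finset.card_union_of_disjoint, Finset.card_image_of_injective,
    card_lineSet, Finset.card_singleton]
  · intro p q h
    obtain ⟨-, h2, h3⟩ : t = t ∧ p.1 = q.1 ∧ p.2 = q.2 := by simpa [Prod.ext_iff] using h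
    exact Prod.ext h2 h3
  · simp

/-- The edge set of the construction. -/
def Edges (F : Type*) [Field F] [Fintype F] [DecidableEq F] (m : ℕ) :
    Finset (Finset ((Fin m × F × F) ⊕ Option F)) :=
  (Finset.univ : Finset (Fin m × Option F × F)).image fun z => edg z.1 z.2.1 z.2.2

lemma edg_injective :
    Function.Injective (fun z : Fin m × Option F × F => edg (F := F) z.1 z.2.1 z.2.2) := by
  rintro ⟨t, s, b⟩ ⟨t', s', b'⟩ h
  simp only at h
  have hs : s = s' := by
    have := apex_mem_edg (t := t) (s := s) (b := b)
    rw [h] at this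
    exact mem_edg_inr.1 this
  obtain ⟨p, hp⟩ := lineSet_nonempty s b
  have hmem : Sum.inl (t, p.1, p.2) ∈ edg t' s' b' := by
    rw [← h]; exact mem_edg_inl.2 ⟨rfl, by simpa using hp⟩
  obtain ⟨ht, hp'⟩ := mem_edg_inl.1 hmem
  have hb : b = b' := lineSet_same_slope (by simpa using hp) (hs ▸ hp')
  simp [ht, hs, hb]

lemma mem_Edges {e : Finset ((Fin m × F × F) ⊕ Option F)} :
    e ∈ Edges F m ↔ ∃ t s b, e = edg t s b := by
  simp only [Edges, mem_image, mem_univ, true_and]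
  constructor
  · rintro ⟨⟨t, s, b⟩, h⟩; exact ⟨t, s, b, h.symm⟩
  · rintro ⟨t, s, b, h⟩; exact ⟨(t, s, b), h.symm⟩

lemma card_Edges : (Edges F m).card = m * ((Fintype.card F + 1) * Fintype.card F) := by
  rw [Edges, Finset.card_image_of_injective _ edg_injective, Finset.card_univ]
  simp [Fintype.card_prod, Fintype.card_option]
/-- A common `inl`-element of two same-slope edges forces the edges' parameters to agree. -/
lemma eq_of_inl_mem {t t' tt : Fin m} {s : Option F} {b b' x y : F}
    (h1 : Sum.inl (tt, x, y) ∈ edg t s b) (h2 : Sum.inl (tt, x, y) ∈ edg t' s b') :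
    t = t' ∧ b = b' := by
  obtain ⟨ht1, hp1⟩ := mem_edg_inl.1 h1
  obtain ⟨ht2, hp2⟩ := mem_edg_inl.1 h2
  exact ⟨ht1 ▸ ht2, lineSet_same_slope hp1 hp2⟩

lemma edg_inter_card_le {t t' : Fin m} {s s' : Option F} {b b' : F}
    (h : (t, s, b) ≠ (t', s', b')) :
    (edg t s b ∩ edg t' s' b').card ≤ 1 := by
  rw [Finset.card_le_one]
  intro u hu w hw
  rw [mem_inter] at hu hw
  by_cases hs : s = s'
  · subst hs
    -- any inl element would force equality of parameters
    rcases u with ⟨tu, xu, yu⟩ | su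
    · obtain ⟨h1, h2⟩ := eq_of_inl_mem hu.1 hu.2
      exact absurd (by rw [h1, h2]) h
    · rcases w with ⟨tw, xw, yw⟩ | sw
      · obtain ⟨h1, h2⟩ := eq_of_inl_mem hw.1 hw.2
        exact absurd (by rw [h1, h2]) h
      · rw [mem_edg_inr.1 hu.1, mem_edg_inr.1 hw.1]
  · -- distinct slopes : all common elements are the unique crossing point
    rcases u with ⟨tu, xu, yu⟩ | su
    · rcases w with ⟨tw, xw, yw⟩ | sw
      · obtain ⟨htu, hpu⟩ := mem_edg_inl.1 hu.1
        obtain ⟨htu', hpu'⟩ := mem_edg_inl.1 hu.2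
        obtain ⟨htw, hpw⟩ := mem_edg_inl.1 hw.1
        obtain ⟨htw', hpw'⟩ := mem_edg_inl.1 hw.2
        have := lineSet_inter_unique hs hpu hpu' hpw hpw'
        have h1 : xu = xw := congrArg Prod.fst this
        have h2 : yu = yw := congrArg Prod.snd this
        rw [htu, htw, h1, h2]
      · exact absurd ((mem_edg_inr.1 hw.1).symm.trans (mem_edg_inr.1 hw.2)) hs
    · exact absurd ((mem_edg_inr.1 hu.1).symm.trans (mem_edg_inr.1 hu.2)) hs

lemma isLinear_Edges (r : ℕ) (hrq : r = Fintype.card F + 1) :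
    IsLinear r (Edges F m) := by
  subst hrq
  constructor
  · intro e he
    obtain ⟨t, s, b, rfl⟩ := mem_Edges.1 he
    exact card_edg t s b
  · intro e he f hf hne
    obtain ⟨t, s, b, rfl⟩ := mem_Edges.1 he
    obtain ⟨t', s', b', rfl⟩ := mem_Edges.1 hf
    exact edg_inter_card_le fun hz => hne (by rw [show t = t' from congrArg Prod.fst hz,
      show s = s' from congrArg (fun z => z.2.1) hz, show b = b' from congrArg (fun z => z.2.2) hz])

/-- Two disjoint edges in the same block are impossible. -/
lemma same_block_not_disjoint {t : Fin m} {s s' : Option F} {b b' : F}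
    (h : edg t s b ∩ edg t s' b' = ∅) : False := by
  by_cases hs : s = s'
  · subst hs
    have : Sum.inr s ∈ edg t s b ∩ edg t s b' :=
      mem_inter.2 ⟨apex_mem_edg, apex_mem_edg⟩
    rw [h] at this; exact notMem_empty _ this
  · obtain ⟨p, hp, hp'⟩ := lineSet_inter_nonempty b b' hs
    have : Sum.inl (t, p.1, p.2) ∈ edg t s b ∩ edg t s' b' :=
      mem_inter.2 ⟨mem_edg_inl.2 ⟨rfl, by simpa using hp⟩, mem_edg_inl.2 ⟨rfl, by simpa using hp'⟩⟩
    rw [h] at this; exact notMem_empty _ this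

/-- Two edges with the same slope are never disjoint. -/
lemma same_slope_not_disjoint {t t' : Fin m} {s : Option F} {b b' : F}
    (h : edg t s b ∩ edg t' s b' = ∅) : False := by
  have : Sum.inr s ∈ edg t s b ∩ edg t' s b' :=
    mem_inter.2 ⟨apex_mem_edg, apex_mem_edg⟩
  rw [h] at this; exact notMem_empty _ this

/-- If two edges intersect, they share the slope or the block. -/
lemma slope_or_block {t t' : Fin m} {s s' : Option F} {b b' : F}
    (h : (edg t s b ∩ edg t' s' b').Nonempty) : s = s' ∨ t = t' := by
  obtain ⟨u, hu⟩ := h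
  rw [mem_inter] at hu
  rcases u with ⟨tu, xu, yu⟩ | su
  · exact Or.inr ((mem_edg_inl.1 hu.1).1.symm.trans (mem_edg_inl.1 hu.2).1)
  · exact Or.inl ((mem_edg_inr.1 hu.1).symm.trans (mem_edg_inr.1 hu.2))

lemma not_hasCrown_Edges (r : ℕ) (hrq : r = Fintype.card F + 1) (hq : 2 ≤ Fintype.card F) :
    ¬ HasCrown r (Edges F m) := by
  subst hrq
  rintro ⟨e, he, f, hfE, -, hdisj, hcard⟩
  obtain ⟨te, se, be, rfl⟩ := mem_Edges.1 he
  have hz : ∀ i, ∃ z : Fin m × Option F × F, f i = edg z.1 z.2.1 z.2.2 := by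
    intro i
    obtain ⟨t, s, b, h⟩ := mem_Edges.1 (hfE i)
    exact ⟨(t, s, b), h⟩
  choose z hz using hz
  -- slopes are injective
  have sInj : ∀ i j, (z i).2.1 = (z j).2.1 → i = j := by
    intro i j hij
    by_contra hne
    have hd := hdisj i j hne
    rw [hz i, hz j, ← hij] at hd
    exact same_slope_not_disjoint hd
  -- hence surjective; some edge has slope `se`
  have sBij : Function.Bijective fun i => (z i).2.1 :=
    (Fintype.bijective_iff_injective_and_card _).2 ⟨fun i j h => sInj i j h, by simp⟩
  obtain ⟨i0, hi0⟩ := sBij.2 se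
  have hi0' : (z i0).2.1 = se := hi0
  -- every other edge lies in block te
  have hblock : ∀ i, i ≠ i0 → (z i).1 = te := by
    intro i hne
    have h1 : (edg te se be ∩ f i).Nonempty :=
      Finset.card_pos.1 (by rw [hcard i]; norm_num)
    rw [hz i] at h1
    rcases slope_or_block h1 with h | h
    · exact absurd (sInj i0 i (hi0'.trans h)).symm hne
    · exact h.symm
  -- pick two distinct indices different from i0
  have hbig : 1 < (Finset.univ.erase i0).card := by
    rw [Finset.card_erase_of_mem (mem_univ _), Finset.card_univ, Fintype.card_fin]
    omega
  obtain ⟨i1, hi1, i2, hi2, h12⟩ := Finset.one_lt_card.1 hbig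
  rw [Finset.mem_erase] at hi1 hi2
  have := hdisj i1 i2 h12
  rw [hz i1, hz i2, hblock i1 hi1.1, hblock i2 hi2.1] at this
  exact same_block_not_disjoint this

lemma not_hasCStar_Edges (r : ℕ) (hrq : r = Fintype.card F + 1) (hq : 2 ≤ Fintype.card F) :
    ¬ HasCStar r (Edges F m) := by
  subst hrq
  rintro ⟨v, e, he, f, hfE, -, -, -, hdisj, hcard, -⟩
  obtain ⟨te, se, be, rfl⟩ := mem_Edges.1 he
  have hz : ∀ i, ∃ z : Fin m × Option F × F, f i = edg z.1 z.2.1 z.2.2 := by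
    intro i
    obtain ⟨t, s, b, h⟩ := mem_Edges.1 (hfE i)
    exact ⟨(t, s, b), h⟩
  choose z hz using hz
  have meets : ∀ i, (z i).2.1 = se ∨ (z i).1 = te := by
    intro i
    have h1 : (edg te se be ∩ f i).Nonempty :=
      Finset.card_pos.1 (by rw [hcard i]; norm_num)
    rw [hz i] at h1
    rcases slope_or_block h1 with h | h
    · exact Or.inl h.symm
    · exact Or.inr h.symm
  -- the three designated indices
  set jr2 : Fin (Fintype.card F + 1) := ⟨Fintype.card F + 1 - 2, by omega⟩ with hjr2
  set jr1 : Fin (Fintype.card F + 1) := ⟨Fintype.card F, by omega⟩ with hjr1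
  set i0 : Fin (Fintype.card F + 1) := ⟨0, by omega⟩ with hi0d
  have hjr2v : (jr2 : ℕ) = Fintype.card F + 1 - 2 := rfl
  have hjr1v : (jr1 : ℕ) = Fintype.card F := rfl
  have hi0v : (i0 : ℕ) = 0 := rfl
  have hne21 : jr2 ≠ jr1 := by
    intro h
    have := congrArg Fin.val h
    rw [hjr2v, hjr1v] at this
    omega
  have D1 : f jr2 ∩ f jr1 = ∅ := hdisj jr2 jr1 (by omega) hne21
  have sne : (z jr2).2.1 ≠ (z jr1).2.1 := by
    intro h
    rw [hz jr2, hz jr1] at D1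
    exact same_slope_not_disjoint (h ▸ D1)
  -- extract index `ib` with block `te`, slope ≠ `se`, and index `ia` with slope `se`
  have key : ∃ ib : Fin (Fintype.card F + 1), Fintype.card F + 1 - 2 ≤ (ib : ℕ) ∧
      (z ib).1 = te ∧ (z ib).2.1 ≠ se ∧
      ∃ ia : Fin (Fintype.card F + 1), Fintype.card F + 1 - 2 ≤ (ia : ℕ) ∧ ia ≠ ib ∧
        (z ia).2.1 = se := by
    rcases meets jr2 with h | h
    · rcases meets jr1 with h' | h'
      · exact absurd (h.trans h'.symm) sne
      · exact ⟨jr1, by omega, h', fun hc => sne (h.trans hc.symm),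
          jr2, by omega, hne21, h⟩
    · rcases meets jr1 with h' | h'
      · exact ⟨jr2, by omega, h, fun hc => sne (hc.trans h'.symm),
          jr1, by omega, hne21.symm, h'⟩
      · rw [hz jr2, hz jr1, h, h'] at D1
        exact (same_block_not_disjoint D1).elim
  obtain ⟨ib, hib, hibt, hibs, ia, hia, hab, hias⟩ := key
  -- i0 is a star index, distinct from ia and ib
  have hi0b : ib ≠ i0 := by
    intro h
    have := congrArg Fin.val h
    rw [hi0v] at this
    omega
  have hi0a : ia ≠ i0 := by
    intro h
    have := congrArg Fin.val h
    rw [hi0v] at this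
    omega
  have Db : f ib ∩ f i0 = ∅ := hdisj ib i0 hib hi0b
  have Da : f ia ∩ f i0 = ∅ := hdisj ia i0 hia hi0a
  rcases meets i0 with h | h
  · rw [hz ia, hz i0] at Da
    exact same_slope_not_disjoint ((hias.trans h.symm) ▸ Da)
  · rw [hz ib, hz i0, hibt, h] at Db
    exact same_block_not_disjoint Db
section Transfer

variable {V W : Type*} [DecidableEq V] [DecidableEq W]

lemma isLinear_map (σ : V ≃ W) {r : ℕ} {E : Finset (Finset V)} (h : IsLinear r E) :
    IsLinear r (E.image (Finset.map σ.toEmbedding)) := by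
  constructor
  · intro e' he'
    obtain ⟨e, he, rfl⟩ := Finset.mem_image.1 he'
    rw [Finset.card_map]
    exact h.1 e he
  · intro e' he' f' hf' hne
    obtain ⟨e, he, rfl⟩ := Finset.mem_image.1 he'
    obtain ⟨f, hf, rfl⟩ := Finset.mem_image.1 hf'
    rw [← Finset.map_inter, Finset.card_map]
    exact h.2 e he f hf fun hef => hne (by rw [hef])

lemma hasCrown_of_map {σ : V ≃ W} {r : ℕ} {E : Finset (Finset V)}
    (h : HasCrown r (E.image (Finset.map σ.toEmbedding))) : HasCrown r E := by
  obtain ⟨e', he', f', hf'E, hf'ne, hdisj, hcard⟩ := h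
  obtain ⟨e, he, rfl⟩ := Finset.mem_image.1 he'
  have hg : ∀ i, ∃ g, g ∈ E ∧ f' i = g.map σ.toEmbedding := by
    intro i
    obtain ⟨g, hgE, hgeq⟩ := Finset.mem_image.1 (hf'E i)
    exact ⟨g, hgE, hgeq.symm⟩
  choose g hgE hfg using hg
  refine ⟨e, he, g, hgE, ?_, ?_, ?_⟩
  · intro i hie
    exact hf'ne i (by rw [hfg i, hie])
  · intro i j hij
    have := hdisj i j hij
    rw [hfg i, hfg j, ← Finset.map_inter] at this
    exact Finset.map_eq_empty.1 this
  · intro i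
    have := hcard i
    rw [hfg i, ← Finset.map_inter, Finset.card_map] at this
    exact this

lemma hasCStar_of_map {σ : V ≃ W} {r : ℕ} {E : Finset (Finset V)}
    (h : HasCStar r (E.image (Finset.map σ.toEmbedding))) : HasCStar r E := by
  obtain ⟨v', e', he', f', hf'E, hf'ne, hvmem, hsing, hdisj, hcard, hv'e⟩ := h
  obtain ⟨e, he, rfl⟩ := Finset.mem_image.1 he'
  have hg : ∀ i, ∃ g, g ∈ E ∧ f' i = g.map σ.toEmbedding := by
    intro i
    obtain ⟨g, hgE, hgeq⟩ := Finset.mem_image.1 (hf'E i)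
    exact ⟨g, hgE, hgeq.symm⟩
  choose g hgE hfg using hg
  refine ⟨σ.symm v', e, he, g, hgE, ?_, ?_, ?_, ?_, ?_, ?_⟩
  · intro i hie
    exact hf'ne i (by rw [hfg i, hie])
  · intro i hi
    have := hvmem i hi
    rw [hfg i, Finset.mem_map_equiv] at this
    exact this
  · intro i j hi hj hij
    have := hsing i j hi hj hij
    rw [hfg i, hfg j, ← Finset.map_inter] at this
    apply Finset.map_injective σ.toEmbedding
    rw [this, Finset.map_singleton]
    simp
  · intro i j hi hij
    have := hdisj i j hi hij
    rw [hfg i, hfg j, ← Finset.map_inter] at this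
    exact Finset.map_eq_empty.1 this
  · intro i
    have := hcard i
    rw [hfg i, ← Finset.map_inter, Finset.card_map] at this
    exact this
  · intro hmem
    exact hv'e (by rw [← σ.apply_symm_apply v']; exact Finset.mem_map_of_mem _ hmem)

end Transfer

end CrownConstr

/-- If `r - 1` is a prime power and `n = (r-1)^2 m + r`, there is a `{C_{1r}, C*}`-free
linear `r`-graph on `n` vertices with `r(r-1)m` edges; hence
`ex_r^{lin}(n, {C_{1r}, C*}) ≥ r(r-1)⌊(n-r)/(r-1)^2⌋`. -/
theorem crown_cstar_free_construction (r : ℕ) (hr : 3 ≤ r)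
    (p k : ℕ) (hp : p.Prime) (hk : 0 < k) (hpp : r - 1 = p ^ k)
    (m : ℕ) (hm : 0 < m) :
    ∃ E : Finset (Finset (Fin ((r - 1) ^ 2 * m + r))),
      IsLinear r E ∧ ¬ HasCrown r E ∧ ¬ HasCStar r E ∧
      E.card = r * (r - 1) * m ∧
      r * (r - 1) * (((r - 1) ^ 2 * m + r - r) / (r - 1) ^ 2) ≤ E.card := by
  haveI : Fact p.Prime := ⟨hp⟩
  obtain ⟨q, rfl⟩ : ∃ q, r = q + 1 := ⟨r - 1, by omega⟩
  simp only [Nat.add_sub_cancel] at hpp ⊢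
  let F := GaloisField p k
  haveI : Fintype F := Fintype.ofFinite F
  haveI : DecidableEq F := Classical.decEq F
  have hcardF : Fintype.card F = q := by
    rw [← Nat.card_eq_fintype_card, GaloisField.card p k (by omega), hpp]
  have hq : 2 ≤ Fintype.card F := by
    have h1 := hp.two_le
    have h2 : p ≤ p ^ k := Nat.le_self_pow hk.ne' p
    omega
  have hr1 : q + 1 = Fintype.card F + 1 := by omega
  have hcardS : Fintype.card ((Fin m × F × F) ⊕ Option F) = q ^ 2 * m + (q + 1) := by
    rw [Fintype.card_sum, Fintype.card_prod, Fintype.card_prod, Fintype.card_option,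
      Fintype.card_fin, hcardF]
    ring
  let σ : ((Fin m × F × F) ⊕ Option F) ≃ Fin (q ^ 2 * m + (q + 1)) :=
    Fintype.equivFinOfCardEq hcardS
  have hEcard : ((CrownConstr.Edges F m).image (Finset.map σ.toEmbedding)).card
      = (q + 1) * q * m := by
    rw [Finset.card_image_of_injective _ (Finset.map_injective _), CrownConstr.card_Edges,
      hcardF]
    ring
  refine ⟨(CrownConstr.Edges F m).image (Finset.map σ.toEmbedding), ?_, ?_, ?_, hEcard, ?_⟩
  · exact CrownConstr.isLinear_map σ (CrownConstr.isLinear_Edges (F := F) (m := m) _ hr1)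
  · exact fun h =>
      CrownConstr.not_hasCrown_Edges _ hr1 hq (CrownConstr.hasCrown_of_map h)
  · exact fun h =>
      CrownConstr.not_hasCStar_Edges _ hr1 hq (CrownConstr.hasCStar_of_map h)
  · rw [hEcard]
    have h2 : 0 < q ^ 2 := by
      have : 0 < q := by omega
      positivity
    rw [Nat.mul_div_cancel_left m h2]
end

section
/- Let r ≥ 3 and let G be a linear r-uniform hypergraph that is {C_{1r}, C*}-free. Suppose e = {u_1,...,u_r} is an edge with d(u_1) ≥ (r-1)^2 + 1, d(u_2) ≥ (r-1)^2 + 1, and d(u_i) ≥ (r-1)^2 for 3 ≤ i ≤ r. Then d(u_1) = d(u_2) = (r-1)^2 + 1. -/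
open Finset

/-!
Every degree on `e` is at least `(r-1)^2`, so it suffices to show that none exceeds
`(r-1)^2 + 1`. In a linear `r`-graph, an edge `b` meeting `e` away from a vertex `x ∈ e` meets at
most `r - 1` of the other edges through `x`: each of them meets `b` in one of its `r - 1`
vertices outside `e`, and two vertices lie in at most one edge. Hence edges through the `u_j`,
other than `e`, can be chosen greedily pairwise disjoint as long as the `k`-th vertex treated
has degree at least `(k-1)(r-1) + 2`. If `d(u_i) ≥ (r-1)^2 + 2`, treating `u_i` last yields a
crown on `e`.
-/

open Function

section

variable {V ι : Type*} [DecidableEq V] {r : ℕ} {E : Finset (Finset V)} {e : Finset V}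

namespace IsLinear

lemma eq_of_mem_of_mem (hlin : IsLinear r E) {f g : Finset V} (hf : f ∈ E) (hg : g ∈ E)
    {x y : V} (hxy : x ≠ y) (hxf : x ∈ f) (hyf : y ∈ f) (hxg : x ∈ g) (hyg : y ∈ g) :
    f = g := by
  by_contra hfg
  have hsub : ({x, y} : Finset V) ⊆ f ∩ g := by
    simp only [insert_subset_iff, singleton_subset_iff, mem_inter]
    exact ⟨⟨hxf, hxg⟩, hyf, hyg⟩
  have := (card_le_card hsub).trans (hlin.2 f hf g hg hfg)
  rw [card_pair hxy] at this
  omega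

lemma card_filter_mem_mem_le_one (hlin : IsLinear r E) {x y : V} (hxy : x ≠ y) :
    #{f ∈ E | x ∈ f ∧ y ∈ f} ≤ 1 := by
  refine card_le_one.2 fun f hf g hg => ?_
  rw [mem_filter] at hf hg
  exact hlin.eq_of_mem_of_mem hf.1 hg.1 hxy hf.2.1 hf.2.2 hg.2.1 hg.2.2

lemma card_inter_eq_one (hlin : IsLinear r E) {f : Finset V} (he : e ∈ E) (hf : f ∈ E)
    (hfe : f ≠ e) {x : V} (hxe : x ∈ e) (hxf : x ∈ f) : #(e ∩ f) = 1 :=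
  (hlin.2 e he f hf hfe.symm).antisymm (card_pos.2 ⟨x, mem_inter.2 ⟨hxe, hxf⟩⟩)

lemma card_filter_not_disjoint_le (hlin : IsLinear r E) (he : e ∈ E) {x : V} (hxe : x ∈ e)
    {b : Finset V} (hb : b ∈ E) (hxb : x ∉ b) (hbe : (b ∩ e).Nonempty) :
    #{f ∈ E.erase e | x ∈ f ∧ ¬Disjoint f b} ≤ r - 1 := by
  obtain ⟨w₀, hw₀⟩ := hbe
  rw [mem_inter] at hw₀
  have hxw₀ : x ≠ w₀ := fun h => hxb (h ▸ hw₀.1)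
  have hsub : {f ∈ E.erase e | x ∈ f ∧ ¬Disjoint f b} ⊆
      (b.erase w₀).biUnion fun w => {f ∈ E | x ∈ f ∧ w ∈ f} := by
    intro f hf
    obtain ⟨⟨hfe, hfE⟩, hxf, hfb⟩ := by simpa only [mem_filter, mem_erase] using hf
    obtain ⟨w, hwf, hwb⟩ := not_disjoint_iff.1 hfb
    have hww₀ : w ≠ w₀ := by
      rintro rfl
      exact hfe (hlin.eq_of_mem_of_mem hfE he hxw₀ hxf hwf hxe hw₀.2)
    exact mem_biUnion.2 ⟨w, mem_erase.2 ⟨hww₀, hwb⟩, mem_filter.2 ⟨hfE, hxf, hwf⟩⟩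
  calc _ ≤ #(b.erase w₀) * 1 :=
        (card_le_card hsub).trans <| card_biUnion_le_card_mul _ _ _ fun w hw =>
          hlin.card_filter_mem_mem_le_one fun h => hxb (h ▸ mem_of_mem_erase hw)
    _ = r - 1 := by rw [mul_one, card_erase_of_mem hw₀.1, hlin.1 b hb]

lemma exists_edge_disjoint (hlin : IsLinear r E) (he : e ∈ E) {x : V} (hxe : x ∈ e)
    {s : Finset ι} {f : ι → Finset V} (hf : ∀ j ∈ s, f j ∈ E ∧ x ∉ f j ∧ (f j ∩ e).Nonempty)
    (hdeg : #s * (r - 1) + 2 ≤ degree E x) :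
    ∃ g ∈ E, g ≠ e ∧ x ∈ g ∧ ∀ j ∈ s, Disjoint g (f j) := by
  have hcard : #{g ∈ E.erase e | x ∈ g} = degree E x - 1 := by
    rw [degree, filter_erase, card_erase_of_mem (mem_filter.2 ⟨he, hxe⟩)]
  have hblocked : #(s.biUnion fun j => {g ∈ E.erase e | x ∈ g ∧ ¬Disjoint g (f j)}) ≤
      #s * (r - 1) :=
    card_biUnion_le_card_mul _ _ _ fun j hj =>
      hlin.card_filter_not_disjoint_le he hxe (hf j hj).1 (hf j hj).2.1 (hf j hj).2.2
  obtain ⟨g, hg, hgfree⟩ := exists_mem_notMem_of_card_lt_card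
    (by rw [hcard]; omega :
      #(s.biUnion fun j => {g ∈ E.erase e | x ∈ g ∧ ¬Disjoint g (f j)}) <
        #{g ∈ E.erase e | x ∈ g})
  obtain ⟨⟨hge, hgE⟩, hxg⟩ := by simpa only [mem_filter, mem_erase] using hg
  refine ⟨g, hgE, hge, hxg, fun j hj => ?_⟩
  by_contra hgj
  exact hgfree (mem_biUnion.2 ⟨j, hj, mem_filter.2 ⟨mem_erase.2 ⟨hge, hgE⟩, hxg, hgj⟩⟩)

end IsLinear

/-- `f` gives the legs at the vertices `u i`, `i ∈ s`, of a crown with body `e`. -/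
def IsCrownLegs (E : Finset (Finset V)) (e : Finset V) (u : ι → V) (s : Finset ι)
    (f : ι → Finset V) : Prop :=
  (∀ i ∈ s, f i ∈ E ∧ f i ≠ e ∧ u i ∈ f i) ∧ (s : Set ι).PairwiseDisjoint f

namespace IsCrownLegs

variable {u : ι → V} {s : Finset ι} {f : ι → Finset V}

lemma exists_insert [DecidableEq ι] (hf : IsCrownLegs E e u s f) (hlin : IsLinear r E)
    (he : e ∈ E) (hu : Injective u) (hmem : ∀ i, u i ∈ e) {i : ι} (hi : i ∉ s)
    (hdeg : #s * (r - 1) + 2 ≤ degree E (u i)) :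
    ∃ f', IsCrownLegs E e u (insert i s) f' := by
  have hfree : ∀ j ∈ s, f j ∈ E ∧ u i ∉ f j ∧ (f j ∩ e).Nonempty := by
    intro j hj
    obtain ⟨hfE, hfe, huf⟩ := hf.1 j hj
    refine ⟨hfE, fun hui => hfe ?_, u j, mem_inter.2 ⟨huf, hmem j⟩⟩
    exact hlin.eq_of_mem_of_mem hfE he (hu.ne (hj.ne_of_notMem hi).symm) hui huf (hmem i) (hmem j)
  obtain ⟨g, hgE, hge, hug, hgf⟩ := hlin.exists_edge_disjoint he (hmem i) hfree hdeg
  refine ⟨update f i g, fun j hj => ?_, ?_⟩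
  · obtain rfl | hj := mem_insert.1 hj
    · simpa only [update_self] using ⟨hgE, hge, hug⟩
    · simpa only [update_of_ne (hj.ne_of_notMem hi)] using hf.1 j hj
  · have hs : (s : Set ι).PairwiseDisjoint (update f i g) := fun j hj k hk hjk => by
      simpa only [onFun, update_of_ne (mem_coe.1 hj |>.ne_of_notMem hi),
        update_of_ne (mem_coe.1 hk |>.ne_of_notMem hi)] using hf.2 hj hk hjk
    rw [coe_insert]
    refine hs.insert_of_notMem hi fun j hj => ?_
    simpa only [update_self, update_of_ne (mem_coe.1 hj |>.ne_of_notMem hi)] using hgf j hj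

lemma hasCrown {u : Fin r → V} {f : Fin r → Finset V} (hf : IsCrownLegs E e u univ f)
    (hlin : IsLinear r E) (he : e ∈ E) (hmem : ∀ i, u i ∈ e) : HasCrown r E := by
  have hleg (i : Fin r) := hf.1 i (mem_univ i)
  refine ⟨e, he, f, fun i => (hleg i).1, fun i => (hleg i).2.1, fun i j hij => ?_, fun i => ?_⟩
  · exact disjoint_iff_inter_eq_empty.1 (hf.2 (by simp) (by simp) hij)
  · exact hlin.card_inter_eq_one he (hleg i).1 (hleg i).2.1 (hmem i) (hleg i).2.2

end IsCrownLegs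

lemma IsLinear.exists_isCrownLegs [DecidableEq ι] (hlin : IsLinear r E) (he : e ∈ E)
    {u : ι → V} (hu : Injective u) (hmem : ∀ i, u i ∈ e) (s : Finset ι)
    (hdeg : ∀ i ∈ s, (#s - 1) * (r - 1) + 2 ≤ degree E (u i)) :
    ∃ f, IsCrownLegs E e u s f := by
  induction s using Finset.induction_on with
  | empty => exact ⟨fun _ => ∅, by simp [IsCrownLegs]⟩
  | insert i s hi ih =>
    rw [card_insert_of_notMem hi, Nat.add_sub_cancel] at hdeg
    obtain ⟨f, hf⟩ := ih fun j hj =>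
      le_trans (by gcongr; exact Nat.sub_le _ _) (hdeg j (mem_insert_of_mem hj))
    exact hf.exists_insert hlin he hu hmem hi (hdeg i (mem_insert_self i s))

lemma IsLinear.degree_le_of_not_hasCrown (hlin : IsLinear r E) (hr : 3 ≤ r)
    (hcrown : ¬HasCrown r E) (he : e ∈ E) {u : Fin r → V} (hu : Injective u)
    (hmem : ∀ i, u i ∈ e) (hdeg : ∀ i, (r - 1) ^ 2 ≤ degree E (u i)) (i : Fin r) :
    degree E (u i) ≤ (r - 1) ^ 2 + 1 := by
  by_contra! hi
  have hs : #(univ.erase i) = r - 1 := by simp [card_erase_of_mem]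
  have hsq : (r - 1 - 1) * (r - 1) + (r - 1) = (r - 1) ^ 2 := by
    rw [sq, ← Nat.succ_mul]
    congr 1
    omega
  obtain ⟨f, hf⟩ := hlin.exists_isCrownLegs he hu hmem (univ.erase i) fun j _ => by
    have := hdeg j
    rw [hs]
    omega
  obtain ⟨f', hf'⟩ :=
    hf.exists_insert hlin he hu hmem (notMem_erase i univ) (by rw [hs, ← sq]; omega)
  rw [insert_erase (mem_univ i)] at hf'
  exact hcrown (hf'.hasCrown hlin he hmem)

end

/-- If `e = {u_1,…,u_r}` is an edge of a `{C_{1r}, C*}`-free linear `r`-graph with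
`d(u_1), d(u_2) ≥ (r-1)^2 + 1` and `d(u_i) ≥ (r-1)^2` for `i ≥ 3`, then
`d(u_1) = d(u_2) = (r-1)^2 + 1`. -/
theorem degree_exact {V : Type*} [DecidableEq V]
    (r : ℕ) (hr : 3 ≤ r) (E : Finset (Finset V)) (hlin : IsLinear r E)
    (hfree₁ : ¬ HasCrown r E)
    (e : Finset V) (he : e ∈ E) (u : Fin r → V)
    (hinj : Function.Injective u) (hmem : ∀ i, u i ∈ e)
    (hd1 : (r - 1) ^ 2 + 1 ≤ degree E (u ⟨0, by omega⟩))
    (hd2 : (r - 1) ^ 2 + 1 ≤ degree E (u ⟨1, by omega⟩))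
    (hdi : ∀ i : Fin r, 2 ≤ (i : ℕ) → (r - 1) ^ 2 ≤ degree E (u i)) :
    degree E (u ⟨0, by omega⟩) = (r - 1) ^ 2 + 1 ∧
      degree E (u ⟨1, by omega⟩) = (r - 1) ^ 2 + 1 := by
  have hall : ∀ i, (r - 1) ^ 2 ≤ degree E (u i) := by
    rintro ⟨_ | _ | k, hk⟩
    · exact (Nat.le_succ _).trans hd1
    · exact (Nat.le_succ _).trans hd2
    · exact hdi _ (by simp)
  have hle := hlin.degree_le_of_not_hasCrown hr hfree₁ he hinj hmem hall
  exact ⟨(hle _).antisymm hd1, (hle _).antisymm hd2⟩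
end
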